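/- Let K ≥ 2, n ≥ 1, N = Kn, d ≥ 1, τ > 0, and let (W,H) ∈ OB(d,K) × OB(d,N) be a Riemannian critical point of f. If β_j = 0 for some j ∈ {1,…,N}, then there exists a unit-norm vector w ∈ ℝ^d such that every column of W equals w (i.e., W = w·1_Kᵀ), and moreover β_j = 0 for all j ∈ {1,…,N}. -/
import Mathlib


open scoped BigOperators Matrix

/-- The oblique manifold: matrices all of whose columns have unit Euclidean norm. -/
def OB (p : ℕ) (ι : Type) [Fintype ι] : Set (Matrix (Fin p) ι ℝ) :=
  {M | ∀ j, ∑ i, (M i j) ^ 2 = 1}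

/-- The softmax map `η(z)_j = exp(z_j) / ∑_ℓ exp(z_ℓ)`. -/
noncomputable def softmax {K : ℕ} (z : Fin K → ℝ) (j : Fin K) : ℝ :=
  Real.exp (z j) / ∑ ℓ, Real.exp (z ℓ)

/-- The logits `τ Wᵀ h_j` for the column `j = (k,i)` of `H`. -/
noncomputable def logits {d K n : ℕ} (τ : ℝ) (W : Matrix (Fin d) (Fin K) ℝ)
    (H : Matrix (Fin d) (Fin K × Fin n) ℝ) (j : Fin K × Fin n) : Fin K → ℝ :=
  fun ℓ => τ * ∑ r, W r ℓ * H r j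

/-- The gradient matrix `G`: its column indexed by `(k,i)` is `(1/N)(η(τ Wᵀ h_{k,i}) − e_k)`. -/
noncomputable def Gmat {d K n : ℕ} (τ : ℝ) (W : Matrix (Fin d) (Fin K) ℝ)
    (H : Matrix (Fin d) (Fin K × Fin n) ℝ) : Matrix (Fin K) (Fin K × Fin n) ℝ :=
  fun ℓ j => (1 / ((K : ℝ) * n)) * (softmax (logits τ W H j) ℓ - if ℓ = j.1 then 1 else 0)

/-- `ddiag A` is the diagonal matrix with the same diagonal as `A`. -/
def ddiag {ι : Type} [Fintype ι] [DecidableEq ι] (A : Matrix ι ι ℝ) : Matrix ι ι ℝ :=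
  Matrix.diagonal fun i => A i i

/-- `(W,H)` is a Riemannian critical point of `f` if
`H Gᵀ = W ddiag(Wᵀ H Gᵀ)` and `W G = H ddiag(Hᵀ W G)`. -/
noncomputable def IsCriticalPoint {d K n : ℕ} (τ : ℝ) (W : Matrix (Fin d) (Fin K) ℝ)
    (H : Matrix (Fin d) (Fin K × Fin n) ℝ) : Prop :=
  H * (Gmat τ W H)ᵀ = W * ddiag (Wᵀ * (H * (Gmat τ W H)ᵀ)) ∧
  W * Gmat τ W H = H * ddiag (Hᵀ * (W * Gmat τ W H))

/-- `α_k = ⟨w_k, H gᵏ⟩` where `gᵏ` is the `k`-th row of `G`. -/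
noncomputable def alphaCoef {d K n : ℕ} (τ : ℝ) (W : Matrix (Fin d) (Fin K) ℝ)
    (H : Matrix (Fin d) (Fin K × Fin n) ℝ) (k : Fin K) : ℝ :=
  ∑ r, W r k * ∑ j, H r j * Gmat τ W H k j

/-- `β_j = ⟨h_j, W g_j⟩` where `g_j` is the `j`-th column of `G`. -/
noncomputable def betaCoef {d K n : ℕ} (τ : ℝ) (W : Matrix (Fin d) (Fin K) ℝ)
    (H : Matrix (Fin d) (Fin K × Fin n) ℝ) (j : Fin K × Fin n) : ℝ :=
  ∑ r, H r j * ∑ ℓ, W r ℓ * Gmat τ W H ℓ j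

theorem beta_zero_implies_collapsed_classifier (d K n : ℕ) (hK : 2 ≤ K) (hn : 1 ≤ n) (hd : 1 ≤ d)
    (τ : ℝ) (hτ : 0 < τ)
    (W : Matrix (Fin d) (Fin K) ℝ) (H : Matrix (Fin d) (Fin K × Fin n) ℝ)
    (hW : W ∈ OB d (Fin K)) (hH : H ∈ OB d (Fin K × Fin n))
    (hcrit : IsCriticalPoint τ W H)
    (hzero : ∃ j : Fin K × Fin n, betaCoef τ W H j = 0) :
    (∃ w : Fin d → ℝ, (∑ r, (w r) ^ 2 = 1) ∧ ∀ (r : Fin d) (k : Fin K), W r k = w r) ∧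
    (∀ j : Fin K × Fin n, betaCoef τ W H j = 0) := by
  obtain ⟨j0, hβ0⟩ := hzero
  haveI : NeZero K := ⟨by omega⟩
  haveI : Nonempty (Fin K) := ⟨⟨0, by omega⟩⟩
  have hcpos : (0:ℝ) < 1 / ((K:ℝ) * n) := by
    have h1 : (0:ℝ) < (K:ℝ) := by exact_mod_cast (by omega : 0 < K)
    have h2 : (0:ℝ) < (n:ℝ) := by exact_mod_cast (by omega : 0 < n)
    positivity
  have hcne : (1 / ((K:ℝ) * n)) ≠ 0 := ne_of_gt hcpos
  -- softmax sums to 1 and is positive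
  have hexp_pos : ∀ j : Fin K × Fin n, (0:ℝ) < ∑ ℓ, Real.exp (logits τ W H j ℓ) :=
    fun j => Finset.sum_pos (fun _ _ => Real.exp_pos _) Finset.univ_nonempty
  have hsm_sum : ∀ j : Fin K × Fin n, ∑ ℓ, softmax (logits τ W H j) ℓ = 1 := by
    intro j
    unfold softmax
    rw [← Finset.sum_div, div_self (ne_of_gt (hexp_pos j))]
  have hsm_pos : ∀ (j : Fin K × Fin n) (ℓ : Fin K), 0 < softmax (logits τ W H j) ℓ :=
    fun j ℓ => div_pos (Real.exp_pos _) (hexp_pos j)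
  -- columns of G sum to zero
  have hGcol : ∀ j : Fin K × Fin n, ∑ ℓ, Gmat τ W H ℓ j = 0 := by
    intro j
    unfold Gmat
    rw [← Finset.mul_sum, Finset.sum_sub_distrib, hsm_sum j]
    simp
  -- the diagonal entry at (j0,j0) is betaCoef j0
  have hA : (Hᵀ * (W * Gmat τ W H)) j0 j0 = betaCoef τ W H j0 := by
    unfold betaCoef
    simp [Matrix.mul_apply, Matrix.transpose_apply]
  -- from the second critical-point equation, the j0 column of W*G vanishes
  have hWG0 : ∀ r, ∑ ℓ, W r ℓ * Gmat τ W H ℓ j0 = 0 := by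
    intro r
    have h := congrFun (congrFun hcrit.2 r) j0
    rw [Matrix.mul_apply] at h
    rw [show ddiag (Hᵀ * (W * Gmat τ W H)) =
        Matrix.diagonal (fun i => (Hᵀ * (W * Gmat τ W H)) i i) from rfl,
      Matrix.mul_diagonal, hA, hβ0, mul_zero] at h
    exact h
  set p : Fin K → ℝ := softmax (logits τ W H j0) with hp
  -- fixed point equation : ∑ p ℓ • w_ℓ = w_{j0.1}
  have hfix : ∀ r, ∑ ℓ, p ℓ * W r ℓ = W r j0.1 := by
    intro r
    have h := hWG0 r
    unfold Gmat at h
    have e : ∀ ℓ : Fin K, W r ℓ * ((1 / ((K:ℝ) * n)) * (p ℓ - if ℓ = j0.1 then 1 else 0))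
        = (1 / ((K:ℝ) * n)) * (p ℓ * W r ℓ) -
          (1 / ((K:ℝ) * n)) * (W r ℓ * if ℓ = j0.1 then 1 else 0) := fun ℓ => by ring
    rw [Finset.sum_congr rfl (fun ℓ _ => e ℓ), Finset.sum_sub_distrib,
      ← Finset.mul_sum, ← Finset.mul_sum] at h
    have hite : ∑ ℓ, (W r ℓ * if ℓ = j0.1 then (1:ℝ) else 0) = W r j0.1 := by
      simp [mul_ite]
    rw [hite, ← mul_sub] at h
    have := (mul_eq_zero.mp h).resolve_left hcne
    linarith [this]
  -- inner products of columns with column j0.1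
  have hQ : ∀ ℓ, ∑ r, (W r j0.1 - W r ℓ)^2 = 2 - 2 * ∑ r, W r j0.1 * W r ℓ := by
    intro ℓ
    have e : ∀ r : Fin d, (W r j0.1 - W r ℓ)^2
        = ((W r j0.1)^2 + (W r ℓ)^2) - 2*(W r j0.1 * W r ℓ) := fun r => by ring
    rw [Finset.sum_congr rfl (fun r _ => e r), Finset.sum_sub_distrib,
      Finset.sum_add_distrib, hW j0.1, hW ℓ, ← Finset.mul_sum]
    ring
  have hSle : ∀ ℓ, ∑ r, W r j0.1 * W r ℓ ≤ 1 := by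
    intro ℓ
    have h0 : 0 ≤ ∑ r, (W r j0.1 - W r ℓ)^2 :=
      Finset.sum_nonneg fun r _ => sq_nonneg _
    rw [hQ ℓ] at h0
    linarith
  -- ∑ ℓ p ℓ * ⟨w_{j0.1}, w_ℓ⟩ = 1
  have hsum1 : ∑ ℓ, p ℓ * (∑ r, W r j0.1 * W r ℓ) = 1 := by
    have hswap : ∑ ℓ, p ℓ * (∑ r, W r j0.1 * W r ℓ)
        = ∑ r, W r j0.1 * (∑ ℓ, p ℓ * W r ℓ) := by
      simp_rw [Finset.mul_sum]
      rw [Finset.sum_comm]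
      exact Finset.sum_congr rfl fun r _ => Finset.sum_congr rfl fun ℓ _ => by ring
    rw [hswap]
    have : ∑ r, W r j0.1 * W r j0.1 = 1 := by
      simpa [pow_two] using hW j0.1
    rw [Finset.sum_congr rfl fun r _ => by rw [hfix r]]
    exact this
  -- hence every ⟨w_{j0.1}, w_ℓ⟩ = 1
  have hSeq : ∀ ℓ, ∑ r, W r j0.1 * W r ℓ = 1 := by
    intro ℓ
    have hzero' : ∑ ℓ, p ℓ * (1 - ∑ r, W r j0.1 * W r ℓ) = 0 := by
      rw [Finset.sum_congr rfl fun ℓ _ => (by ring :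
        p ℓ * (1 - ∑ r, W r j0.1 * W r ℓ) = p ℓ - p ℓ * ∑ r, W r j0.1 * W r ℓ),
        Finset.sum_sub_distrib, hsm_sum j0, hsum1]
      ring
    have hnonneg : ∀ m ∈ Finset.univ, 0 ≤ p m * (1 - ∑ r, W r j0.1 * W r m) :=
      fun m _ => mul_nonneg (le_of_lt (hsm_pos j0 m)) (by linarith [hSle m])
    have := (Finset.sum_eq_zero_iff_of_nonneg hnonneg).mp hzero' ℓ (Finset.mem_univ ℓ)
    rcases mul_eq_zero.mp this with h | h
    · exact absurd h (ne_of_gt (hsm_pos j0 ℓ))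
    · linarith
  -- equality in Cauchy–Schwarz : all columns equal
  have hWeq : ∀ (r : Fin d) (ℓ : Fin K), W r ℓ = W r j0.1 := by
    intro r ℓ
    have hq0 : ∑ r, (W r j0.1 - W r ℓ)^2 = 0 := by
      rw [hQ ℓ, hSeq ℓ]; ring
    have := (Finset.sum_eq_zero_iff_of_nonneg
      (fun r _ => sq_nonneg (W r j0.1 - W r ℓ))).mp hq0 r (Finset.mem_univ r)
    have := pow_eq_zero_iff (n := 2) (by norm_num) |>.mp this
    linarith
  refine ⟨⟨fun r => W r j0.1, hW j0.1, fun r k => hWeq r k⟩, ?_⟩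
  intro j
  unfold betaCoef
  apply Finset.sum_eq_zero
  intro r _
  have hinner : ∑ ℓ, W r ℓ * Gmat τ W H ℓ j = 0 := by
    calc ∑ ℓ, W r ℓ * Gmat τ W H ℓ j
        = W r j0.1 * ∑ ℓ, Gmat τ W H ℓ j := by
          rw [Finset.mul_sum]
          exact Finset.sum_congr rfl fun ℓ _ => by rw [hWeq r ℓ]
      _ = 0 := by rw [hGcol j, mul_zero]
  rw [hinner, mul_zero]
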